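/- Let F ∈ ℝ_{≥0}[s, ν_b, ν_w][[t]] be a power series all of whose monomials t^m s^g ν_b^a ν_w^b (with nonnegative coefficients) satisfy m ≥ a + b. Fix reals x, y > 0 and let Ξ be the evaluation ν_b := x, ν_w := y. Then for every integer k ≥ 0, Ξ(Λ^k F) ≥ 2^k t^{2k} (min(y², x))^k D_t^k (Ξ F), coefficientwise in s and t, where Λ := 2t²((ν_w² + ν_b) D_t + ν_w (1 − ν_b ν_w) ∂_b + (1 − ν_b ν_w) ∂_w) and D_t = t ∂/∂t. -/

import Mathlib

/-!
Split Λ = 2t²ν_w²(D_t − ν_b∂_b) + 2t²ν_b(D_t − ν_w∂_w) + 2t²(ν_w∂_b + ∂_w). The Euler operators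
ν_b∂_b and ν_w∂_w multiply t^m s^g ν_b^a ν_w^b by a and b, so each summand maps 𝔸 into 𝔸, and
after Ξ the first two contribute 2((m − a)y² + (m − b)x) ≥ 2 min(y², x) m per monomial of 𝔸
(as a + b ≤ m), while the third contributes something nonnegative. Thus
Ξ(ΛF) ≥ 2 min(y², x) t² D_t(ΞF) coefficientwise, and iterating (with Λ𝔸 ⊆ 𝔸 and
m^k ≤ (m + 2)^k) gives the claim.
-/

namespace Stmt7

/-- Formal power series in t, s, ν_b, ν_w with real coefficients
(variable 0 = t, 1 = s, 2 = ν_b, 3 = ν_w). -/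
abbrev R4 : Type := MvPowerSeries (Fin 4) ℝ

noncomputable def T : R4 := MvPowerSeries.X 0
noncomputable def B : R4 := MvPowerSeries.X 2
noncomputable def W : R4 := MvPowerSeries.X 3

/-- D_t = t ∂/∂t. -/
noncomputable def Dt (f : R4) : R4 := fun d => (d 0 : ℝ) * f d
/-- ∂/∂ν_b. -/
noncomputable def pb (f : R4) : R4 := fun d => ((d 2 : ℕ) + 1 : ℝ) * f (d + Finsupp.single 2 1)
/-- ∂/∂ν_w. -/
noncomputable def pw (f : R4) : R4 := fun d => ((d 3 : ℕ) + 1 : ℝ) * f (d + Finsupp.single 3 1)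

/-- Λ := 2t²((ν_w² + ν_b) D_t + ν_w (1 − ν_b ν_w) ∂_b + (1 − ν_b ν_w) ∂_w). -/
noncomputable def Lam (f : R4) : R4 :=
  2 * T ^ 2 * ((W ^ 2 + B) * Dt f + W * (1 - B * W) * pb f + (1 - B * W) * pw f)

/-- Membership in the semiring 𝔸: all coefficients are nonnegative and every monomial
t^m s^g ν_b^a ν_w^b appearing satisfies m ≥ a + b. -/
def A : Set R4 :=
  {f | ∀ d : Fin 4 →₀ ℕ, 0 ≤ MvPowerSeries.coeff d f ∧
    (MvPowerSeries.coeff d f ≠ 0 → d 2 + d 3 ≤ d 0)}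

/-- The evaluation Ξ at ν_b = x, ν_w = y, producing a series in t and s, given by its
coefficients (exponent of t, exponent of s) ↦ coefficient.  (For F ∈ 𝔸 the inner sum is
finite since only exponents a + b ≤ m contribute.) -/
noncomputable def Xi (x y : ℝ) (F : R4) : ℕ → ℕ → ℝ := fun m g =>
  ∑ a ∈ Finset.range (m + 1), ∑ b ∈ Finset.range (m + 1),
    MvPowerSeries.coeff
      (Finsupp.single (0 : Fin 4) m + Finsupp.single 1 g
        + Finsupp.single 2 a + Finsupp.single 3 b) F * x ^ a * y ^ b

/-- D_t = t d/dt acting on series in t (and s). -/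
def Dt' (h : ℕ → ℕ → ℝ) : ℕ → ℕ → ℝ := fun m g => (m : ℝ) * h m g

/-- Multiplication by t^j acting on series in t (and s). -/
def tmul (j : ℕ) (h : ℕ → ℕ → ℝ) : ℕ → ℕ → ℝ := fun m g =>
  if j ≤ m then h (m - j) g else 0

open MvPowerSeries Finset

noncomputable def exponent (m g a b : ℕ) : Fin 4 →₀ ℕ :=
  Finsupp.single 0 m + Finsupp.single 1 g + Finsupp.single 2 a + Finsupp.single 3 b

@[simp] lemma exponent_apply_zero (m g a b : ℕ) : exponent m g a b 0 = m := by simp [exponent]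
@[simp] lemma exponent_apply_one (m g a b : ℕ) : exponent m g a b 1 = g := by simp [exponent]
@[simp] lemma exponent_apply_two (m g a b : ℕ) : exponent m g a b 2 = a := by simp [exponent]
@[simp] lemma exponent_apply_three (m g a b : ℕ) : exponent m g a b 3 = b := by simp [exponent]

lemma exponent_le_exponent {m g a b m' g' a' b' : ℕ} :
    exponent m g a b ≤ exponent m' g' a' b' ↔ m ≤ m' ∧ g ≤ g' ∧ a ≤ a' ∧ b ≤ b' := by
  refine ⟨fun h => ⟨by simpa using h 0, by simpa using h 1, by simpa using h 2, by simpa using h 3⟩,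
    fun ⟨h0, h1, h2, h3⟩ i => ?_⟩
  fin_cases i <;> simpa

lemma exponent_sub_exponent (m g a b m' g' a' b' : ℕ) :
    exponent m' g' a' b' - exponent m g a b = exponent (m' - m) (g' - g) (a' - a) (b' - b) := by
  ext i
  fin_cases i <;> simp

lemma monomial_exponent (c : ℝ) (m a b : ℕ) :
    monomial (exponent m 0 a b) c = C c * T ^ m * B ^ a * W ^ b := by
  simp only [T, B, W, X_pow_eq, ← monomial_zero_eq_C_apply, monomial_mul_monomial, exponent,
    Finsupp.single_zero, mul_one, zero_add, add_zero]

def subsemiringA : Subsemiring R4 where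
  carrier := A
  zero_mem' d := by simp
  one_mem' d := by
    classical
    rw [coeff_one]
    split_ifs with h <;> simp [h]
  add_mem' {f g} hf hg d := by
    refine ⟨add_nonneg (hf d).1 (hg d).1, fun h => ?_⟩
    by_cases hfd : coeff d f = 0
    · exact (hg d).2 fun hgd => h (by simp [hfd, hgd])
    · exact (hf d).2 hfd
  mul_mem' {f g} hf hg d := by
    classical
    rw [coeff_mul]
    refine ⟨sum_nonneg fun p _ => mul_nonneg (hf p.1).1 (hg p.2).1, fun h => ?_⟩
    obtain ⟨p, hp, hpd⟩ := exists_ne_zero_of_sum_ne_zero h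
    rw [HasAntidiagonal.mem_antidiagonal] at hp
    have h1 := (hf p.1).2 (left_ne_zero_of_mul hpd)
    have h2 := (hg p.2).2 (right_ne_zero_of_mul hpd)
    subst hp
    simp only [Finsupp.add_apply]
    omega

lemma monomial_mem_A {c : ℝ} (hc : 0 ≤ c) {n : Fin 4 →₀ ℕ} (hn : n 2 + n 3 ≤ n 0) :
    monomial n c ∈ A := by
  classical
  intro d
  rw [coeff_monomial]
  split_ifs with h
  · exact ⟨hc, fun _ => h ▸ hn⟩
  · simp

lemma mem_A_of_coeff_eq_mul {f g : R4} (φ : (Fin 4 →₀ ℕ) → ℝ) (hf : f ∈ A)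
    (hφ : ∀ d, d 2 + d 3 ≤ d 0 → 0 ≤ φ d) (hg : ∀ d, coeff d g = φ d * coeff d f) : g ∈ A := by
  intro d
  rw [hg]
  by_cases hfd : coeff d f = 0
  · simp [hfd]
  · have hd := (hf d).2 hfd
    exact ⟨mul_nonneg (hφ d hd) (hf d).1, fun _ => hd⟩

lemma mem_A_of_coeff_eq_shift {f g : R4} (i : Fin 4) (hi : i = 2 ∨ i = 3) (hf : f ∈ A)
    (hg : ∀ d, coeff d g = (d i + 1) * coeff (d + Finsupp.single i 1) f) : g ∈ A := by
  intro d
  obtain ⟨hnn, hsupp⟩ := hf (d + Finsupp.single i 1)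
  rw [hg]
  refine ⟨mul_nonneg (by positivity) hnn, fun h => ?_⟩
  have := hsupp (right_ne_zero_of_mul h)
  rcases hi with rfl | rfl <;> simp at this <;> omega

lemma pb_mem_A {f : R4} (hf : f ∈ A) : pb f ∈ A :=
  mem_A_of_coeff_eq_shift 2 (.inl rfl) hf fun _ => rfl

lemma pw_mem_A {f : R4} (hf : f ∈ A) : pw f ∈ A :=
  mem_A_of_coeff_eq_shift 3 (.inr rfl) hf fun _ => rfl

lemma coeff_Dt (f : R4) (d : Fin 4 →₀ ℕ) : coeff d (Dt f) = d 0 * coeff d f := rfl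

lemma coeff_X_mul_of_coeff_eq_shift {f g : R4} (i : Fin 4)
    (hg : ∀ d, coeff d g = (d i + 1) * coeff (d + Finsupp.single i 1) f) (d : Fin 4 →₀ ℕ) :
    coeff d (X i * g) = d i * coeff d f := by
  rw [X_def, coeff_monomial_mul, one_mul]
  split_ifs with h
  · have hi := Finsupp.single_le_iff.mp h
    rw [hg, tsub_add_cancel_of_le h, Finsupp.tsub_apply, Finsupp.single_eq_same, Nat.cast_sub hi,
      Nat.cast_one, sub_add_cancel]
  · rw [Finsupp.single_le_iff, not_le, Nat.lt_one_iff] at h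
    rw [h, Nat.cast_zero, zero_mul]

lemma coeff_B_mul_pb (f : R4) (d : Fin 4 →₀ ℕ) : coeff d (B * pb f) = d 2 * coeff d f :=
  coeff_X_mul_of_coeff_eq_shift 2 (fun _ => rfl) d

lemma coeff_W_mul_pw (f : R4) (d : Fin 4 →₀ ℕ) : coeff d (W * pw f) = d 3 * coeff d f :=
  coeff_X_mul_of_coeff_eq_shift 3 (fun _ => rfl) d

lemma coeff_Dt_sub_B_mul_pb (f : R4) (d : Fin 4 →₀ ℕ) :
    coeff d (Dt f - B * pb f) = ((d 0 : ℝ) - d 2) * coeff d f := by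
  rw [map_sub, coeff_Dt, coeff_B_mul_pb, sub_mul]

lemma coeff_Dt_sub_W_mul_pw (f : R4) (d : Fin 4 →₀ ℕ) :
    coeff d (Dt f - W * pw f) = ((d 0 : ℝ) - d 3) * coeff d f := by
  rw [map_sub, coeff_Dt, coeff_W_mul_pw, sub_mul]

lemma Dt_sub_B_mul_pb_mem_A {f : R4} (hf : f ∈ A) : Dt f - B * pb f ∈ A :=
  mem_A_of_coeff_eq_mul _ hf (fun d hd => by simp only [sub_nonneg, Nat.cast_le]; omega)
    (coeff_Dt_sub_B_mul_pb f)

lemma Dt_sub_W_mul_pw_mem_A {f : R4} (hf : f ∈ A) : Dt f - W * pw f ∈ A :=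
  mem_A_of_coeff_eq_mul _ hf (fun d hd => by simp only [sub_nonneg, Nat.cast_le]; omega)
    (coeff_Dt_sub_W_mul_pw f)

lemma Lam_eq (f : R4) :
    Lam f = monomial (exponent 2 0 0 2) 2 * (Dt f - B * pb f)
      + monomial (exponent 2 0 1 0) 2 * (Dt f - W * pw f)
      + (monomial (exponent 2 0 0 1) 2 * pb f + monomial (exponent 2 0 0 0) 2 * pw f) := by
  simp only [monomial_exponent, map_ofNat, Lam]
  ring

lemma mapsTo_Lam : Set.MapsTo Lam A A := by
  intro f hf
  have hmon : ∀ {a b : ℕ}, a + b ≤ 2 → monomial (exponent 2 0 a b) (2 : ℝ) ∈ subsemiringA :=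
    fun h => monomial_mem_A zero_le_two (by simpa using h)
  rw [Lam_eq]
  exact add_mem (add_mem (mul_mem (hmon (by norm_num)) (Dt_sub_B_mul_pb_mem_A hf))
    (mul_mem (hmon (by norm_num)) (Dt_sub_W_mul_pw_mem_A hf)))
    (add_mem (mul_mem (hmon (by norm_num)) (pb_mem_A hf))
      (mul_mem (hmon (by norm_num)) (pw_mem_A hf)))

lemma min_mul_le_add {u v r s t : ℝ} (hu : 0 ≤ u) (hv : 0 ≤ v) (hs : 0 ≤ s) (ht : 0 ≤ t)
    (hr : r ≤ s + t) : min u v * r ≤ s * u + t * v :=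
  calc min u v * r ≤ min u v * (s + t) := mul_le_mul_of_nonneg_left hr (le_min hu hv)
    _ ≤ s * u + t * v := by nlinarith [min_le_left u v, min_le_right u v]

section Xi

variable (x y : ℝ)

lemma Xi_eq_sum (F : R4) (m g : ℕ) :
    Xi x y F m g = ∑ p ∈ range (m + 1) ×ˢ range (m + 1),
      coeff (exponent m g p.1 p.2) F * x ^ p.1 * y ^ p.2 :=
  (sum_product' _ _ _).symm

lemma Xi_add (F G : R4) (m g : ℕ) : Xi x y (F + G) m g = Xi x y F m g + Xi x y G m g := by
  simp only [Xi_eq_sum, map_add, add_mul, sum_add_distrib]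

variable {x y}

lemma Xi_nonneg (hx : 0 ≤ x) (hy : 0 ≤ y) {F : R4} (hF : F ∈ A) (m g : ℕ) :
    0 ≤ Xi x y F m g := by
  rw [Xi_eq_sum]
  exact sum_nonneg fun p _ => by have := (hF (exponent m g p.1 p.2)).1; positivity

lemma Xi_eq_sum_of_support_subset {F : R4} {m g : ℕ} (S : Finset (ℕ × ℕ))
    (hm : ∀ a b, coeff (exponent m g a b) F ≠ 0 → a ≤ m ∧ b ≤ m)
    (hS : ∀ a b, coeff (exponent m g a b) F ≠ 0 → (a, b) ∈ S) :
    Xi x y F m g = ∑ p ∈ S, coeff (exponent m g p.1 p.2) F * x ^ p.1 * y ^ p.2 := by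
  set φ : ℕ × ℕ → ℝ := fun p => coeff (exponent m g p.1 p.2) F * x ^ p.1 * y ^ p.2
  have hφ : ∀ p ∈ Function.support φ, coeff (exponent m g p.1 p.2) F ≠ 0 :=
    fun p hp => left_ne_zero_of_mul (left_ne_zero_of_mul hp)
  have hrange : Function.support φ ⊆ ↑(range (m + 1) ×ˢ range (m + 1)) := fun p hp => by
    have := hm p.1 p.2 (hφ p hp)
    simp only [coe_product, coe_range, Set.mem_prod, Set.mem_Iio]
    omega
  rw [Xi_eq_sum, ← finsum_eq_sum_of_support_subset φ hrange,
    finsum_eq_sum_of_support_subset φ fun p hp => hS p.1 p.2 (hφ p hp)]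

lemma coeff_monomial_exponent_mul (c : ℝ) (P : R4) (j a₀ b₀ m g a b : ℕ) :
    coeff (exponent m g a b) (monomial (exponent j 0 a₀ b₀) c * P) =
      if j ≤ m ∧ a₀ ≤ a ∧ b₀ ≤ b then c * coeff (exponent (m - j) g (a - a₀) (b - b₀)) P
      else 0 := by
  simp only [coeff_monomial_mul, exponent_le_exponent, exponent_sub_exponent, zero_le, true_and,
    Nat.sub_zero]

lemma Xi_monomial_mul (c : ℝ) {P : R4} (hP : P ∈ A) {j a₀ b₀ : ℕ} (hj : a₀ + b₀ ≤ j)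
    (m g : ℕ) :
    Xi x y (monomial (exponent j 0 a₀ b₀) c * P) (m + j) g =
      c * x ^ a₀ * y ^ b₀ * Xi x y P m g := by
  have hsupp : ∀ a b, coeff (exponent (m + j) g a b) (monomial (exponent j 0 a₀ b₀) c * P) ≠ 0 →
      a₀ ≤ a ∧ b₀ ≤ b ∧ (a - a₀) + (b - b₀) ≤ m := fun a b h => by
    rw [coeff_monomial_exponent_mul] at h
    split_ifs at h with hab
    · have := (hP _).2 (right_ne_zero_of_mul h)
      simp only [exponent_apply_zero, exponent_apply_two, exponent_apply_three] at this
      omega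
    · exact absurd rfl h
  rw [Xi_eq_sum_of_support_subset (((range (m + 1)) ×ˢ range (m + 1)).image
      fun p => (p.1 + a₀, p.2 + b₀)) (fun a b h => by have := hsupp a b h; omega)
      (fun a b h => by
        have := hsupp a b h
        simp only [mem_image, mem_product, mem_range, Prod.mk.injEq]
        exact ⟨(a - a₀, b - b₀), by omega, by omega, by omega⟩),
    sum_image (fun p _ q _ h => by simp only [Prod.mk.injEq] at h; ext <;> omega),
    Xi_eq_sum, mul_sum]
  refine sum_congr rfl fun p _ => ?_
  rw [coeff_monomial_exponent_mul, if_pos (by omega), Nat.add_sub_cancel, Nat.add_sub_cancel,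
    Nat.add_sub_cancel]
  ring

lemma mul_Xi_le_Xi_add_Xi (hx : 0 < x) (hy : 0 < y) {f : R4} (hf : f ∈ A) (m g : ℕ) :
    min (y ^ 2) x * (m * Xi x y f m g) ≤
      y ^ 2 * Xi x y (Dt f - B * pb f) m g + x * Xi x y (Dt f - W * pw f) m g := by
  simp only [Xi_eq_sum, coeff_Dt_sub_B_mul_pb, coeff_Dt_sub_W_mul_pw, exponent_apply_zero,
    exponent_apply_two, exponent_apply_three, mul_sum, ← sum_add_distrib]
  refine sum_le_sum fun p _ => ?_
  obtain ⟨hnn, hsupp⟩ := hf (exponent m g p.1 p.2)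
  simp only [exponent_apply_zero, exponent_apply_two, exponent_apply_three] at hsupp
  by_cases h0 : coeff (exponent m g p.1 p.2) f = 0
  · simp [h0]
  · have hab := hsupp h0
    have key := min_mul_le_add (r := m) (s := m - p.1) (t := m - p.2) (sq_nonneg y) hx.le
      (by rw [sub_nonneg]; exact_mod_cast (by omega : p.1 ≤ m))
      (by rw [sub_nonneg]; exact_mod_cast (by omega : p.2 ≤ m))
      (by have : ((p.1 + p.2 : ℕ) : ℝ) ≤ m := by exact_mod_cast hab
          push_cast at this; linarith)
    have hw : 0 ≤ coeff (exponent m g p.1 p.2) f * x ^ p.1 * y ^ p.2 := by positivity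
    nlinarith [mul_le_mul_of_nonneg_right key hw]


lemma mul_Xi_le_Xi_Lam (hx : 0 < x) (hy : 0 < y) {f : R4} (hf : f ∈ A) (m g : ℕ) :
    2 * min (y ^ 2) x * (m * Xi x y f m g) ≤ Xi x y (Lam f) (m + 2) g := by
  rw [Lam_eq, Xi_add, Xi_add, Xi_add,
    Xi_monomial_mul 2 (Dt_sub_B_mul_pb_mem_A hf) (by norm_num),
    Xi_monomial_mul 2 (Dt_sub_W_mul_pw_mem_A hf) (by norm_num),
    Xi_monomial_mul 2 (pb_mem_A hf) (by norm_num), Xi_monomial_mul 2 (pw_mem_A hf) (by norm_num)]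
  have hpb := Xi_nonneg hx.le hy.le (pb_mem_A hf) m g
  have hpw := Xi_nonneg hx.le hy.le (pw_mem_A hf) m g
  have := mul_Xi_le_Xi_add_Xi hx hy hf m g
  simp only [pow_zero, pow_one, mul_one]
  nlinarith

lemma mul_Xi_le_Xi_Lam_iterate (hx : 0 < x) (hy : 0 < y) (k : ℕ) {F : R4} (hF : F ∈ A)
    (m g : ℕ) :
    (2 * min (y ^ 2) x) ^ k * (m ^ k * Xi x y F m g) ≤ Xi x y (Lam^[k] F) (m + 2 * k) g := by
  induction k generalizing F m with
  | zero => simp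
  | succ k ih =>
    calc (2 * min (y ^ 2) x) ^ (k + 1) * ((m : ℝ) ^ (k + 1) * Xi x y F m g)
        = ((2 * min (y ^ 2) x) ^ k * (m : ℝ) ^ k) * (2 * min (y ^ 2) x * (m * Xi x y F m g)) := by
          ring
      _ ≤ ((2 * min (y ^ 2) x) ^ k * ((m + 2 : ℕ) : ℝ) ^ k) * Xi x y (Lam F) (m + 2) g := by
          have hXi := Xi_nonneg hx.le hy.le hF m g
          refine mul_le_mul (by gcongr; linarith) (mul_Xi_le_Xi_Lam hx hy hF m g)
            (by positivity) (by positivity)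
      _ ≤ Xi x y (Lam^[k + 1] F) (m + 2 * (k + 1)) g := by
          rw [Function.iterate_succ_apply, show m + 2 * (k + 1) = m + 2 + 2 * k by ring, mul_assoc]
          exact ih (mapsTo_Lam hF) (m + 2)

end Xi

lemma Dt'_iterate (h : ℕ → ℕ → ℝ) (k m g : ℕ) : Dt'^[k] h m g = (m : ℝ) ^ k * h m g := by
  induction k with
  | zero => simp
  | succ k ih => rw [Function.iterate_succ_apply', Dt', ih, pow_succ']; ring

/-- for x, y > 0, F ∈ 𝔸 and every k ≥ 0,
Ξ(Λ^k F) ≥ 2^k t^{2k} (min(y²,x))^k D_t^k (Ξ F), coefficientwise in s and t. -/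
theorem stmt_7 (x y : ℝ) (hx : 0 < x) (hy : 0 < y) (F : R4) (hF : F ∈ A)
    (k : ℕ) (m g : ℕ) :
    (2 ^ k * (min (y ^ 2) x) ^ k) * tmul (2 * k) (Dt'^[k] (Xi x y F)) m g
      ≤ Xi x y (Lam^[k] F) m g := by
  unfold tmul
  split_ifs with hk
  · obtain ⟨n, rfl⟩ : ∃ n, m = n + 2 * k := ⟨m - 2 * k, by omega⟩
    rw [Nat.add_sub_cancel, Dt'_iterate, ← mul_pow]
    exact mul_Xi_le_Xi_Lam_iterate hx hy k hF n g
  · rw [mul_zero]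
    exact Xi_nonneg hx.le hy.le (mapsTo_Lam.iterate k hF) m g

end Stmt7
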